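/- Let A1 and A2 be abstract probabilistic timed automata that are implementations (i.e., PTAs, viewed as APTAs with only must-edges, point-valued labelings and constraints with singleton satisfaction sets). If A1 strongly refines A2 (A1 ≼_S A2) then A1 and A2 are probabilistic time-abstracting bisimilar (A1 ∼ A2); the converse implication does not hold in general. -/

import Mathlib

/- ----------------------------------------------------------------------
   Common definitions: (abstract) probabilistic timed automata, region
   automata, satisfaction, refinement, divergence, pruning, abstraction,
   event-clock automata, conjunction and parallel composition.

   Guards (clock constraints) are represented semantically, as sets of
   clock valuations; probability constraints are represented by their
   satisfaction sets (the paper does not fix a constraint language).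
   Regions are taken at the finest granularity (one valuation per
   region), so the region construction yields the (time-abstract)
   semantics of the automaton; the reset function ζ of a region label
   is merged into the target distribution (a PA over the alphabet
   Θ(X) × A × (2^X)^S is represented by the structure `RPA` below,
   whose transitions carry a region label and a distribution over
   reset-set/state pairs).
   ---------------------------------------------------------------------- -/

open scoped Classical
open scoped NNReal ENNReal

noncomputable section

/-- Clock valuations over the clock set `X`. -/
abbrev Val (X : Type) := X → ℝ≥0

def valZero (X : Type) : Val X := fun _ => 0

/-- Letting time `t` elapse. -/
def valShift {X : Type} (v : Val X) (t : ℝ≥0) : Val X := fun x => v x + t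

/-- Resetting the clocks in `Y` to zero. -/
def valReset {X : Type} (v : Val X) (Y : Set X) : Val X :=
  fun x => if x ∈ Y then 0 else v x

/-- Clock constraints (guards) over `X`, represented semantically. -/
abbrev Guard (X : Type) := Set (Val X)

/-- The computed negation of a guard: a set of guards whose joint
complement is the guard. -/
def Guard.negSet {X : Type} (g : Guard X) : Set (Guard X) := {gᶜ}

/-- The three-valued complete lattice `⊥ < ? < ⊤` of modalities. -/
inductive B3 : Type
  | bot
  | may
  | must
deriving DecidableEq

/-- Probabilistic timed automata. -/
structure PTA (L A X AP : Type) where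
  V : L → Set AP
  T : L → Guard X → A → PMF (Set X × L) → Prop
  init : L

/-- Abstract probabilistic timed automata: sets of admissible atomic
propositions, three-valued edges, probability constraints (represented
by their sets of satisfying distributions). -/
structure APTA (L A X AP : Type) where
  V : L → Set (Set AP)
  T : L → Guard X → A → Set (PMF (Set X × L)) → B3
  init : L

/-- Probabilistic automata over the alphabet `Θ(X) × A × (2^X)^S`,
with the reset function of each label merged into the transition's
distribution (which therefore ranges over reset-set/state pairs). -/
structure RPA (S A X AP : Type) where
  V : S → Set AP
  T : S → Val X → A → PMF (Set X × S) → Prop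
  init : S

/-- Abstract probabilistic automata over the alphabet
`Θ(X) × A × (2^X)^S` (see `RPA`). -/
structure RAPA (S A X AP : Type) where
  V : S → Set (Set AP)
  T : S → Val X → A → Set (PMF (Set X × S)) → B3
  init : S

/-! ### Region construction -/

/-- Region automaton of a PTA, before restricting to reachable states. -/
def PTA.regionPre {L A X AP : Type} (M : PTA L A X AP) : RPA (L × Val X) A X AP where
  init := (M.init, valZero X)
  V := fun s => M.V s.1
  T := fun s v a μ' => ∃ g μ t, M.T s.1 g a μ ∧ v = valShift s.2 t ∧ v ∈ g ∧
        μ' = μ.map (fun p => (p.1, (p.2, valReset v p.1)))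

/-- Reachability in an `RPA`. -/
inductive RPA.Reach {S A X AP : Type} (P : RPA S A X AP) : S → Prop
  | init : RPA.Reach P P.init
  | step {s : S} {v : Val X} {a : A} {μ : PMF (Set X × S)} {Y : Set X} {s' : S} :
      RPA.Reach P s → P.T s v a μ → μ (Y, s') ≠ 0 → RPA.Reach P s'

/-- The region PA `R(M)` of a PTA `M` (transitions restricted to
reachable sources). -/
def PTA.region {L A X AP : Type} (M : PTA L A X AP) : RPA (L × Val X) A X AP where
  init := M.regionPre.init
  V := M.regionPre.V
  T := fun s v a μ => M.regionPre.Reach s ∧ M.regionPre.T s v a μ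

/-- Lifting a probability constraint over `2^X × L` to region states. -/
def liftConstraint {X L : Type} (v : Val X) (φ : Set (PMF (Set X × L))) :
    Set (PMF (Set X × (L × Val X))) :=
  (fun μ => μ.map (fun p => (p.1, (p.2, valReset v p.1)))) '' φ

/-- Region APA of an APTA, before restricting to reachable states. -/
def APTA.regionPre {L A X AP : Type} (𝒜 : APTA L A X AP) : RAPA (L × Val X) A X AP where
  init := (𝒜.init, valZero X)
  V := fun s => 𝒜.V s.1
  T := fun s v a φ' =>
    if ∃ g φ t, 𝒜.T s.1 g a φ = B3.must ∧ v = valShift s.2 t ∧ v ∈ g ∧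
        φ' = liftConstraint v φ then B3.must
    else if ∃ g φ t, 𝒜.T s.1 g a φ ≠ B3.bot ∧ v = valShift s.2 t ∧ v ∈ g ∧
        φ' = liftConstraint v φ then B3.may
    else B3.bot

/-- Reachability in an `RAPA`. -/
inductive RAPA.Reach {S A X AP : Type} (N : RAPA S A X AP) : S → Prop
  | init : RAPA.Reach N N.init
  | step {s : S} {v : Val X} {a : A} {φ : Set (PMF (Set X × S))} {μ : PMF (Set X × S)}
      {Y : Set X} {s' : S} :
      RAPA.Reach N s → N.T s v a φ ≠ B3.bot → μ ∈ φ → μ (Y, s') ≠ 0 → RAPA.Reach N s'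

/-- The region APA `R(𝒜)` of an APTA `𝒜`. -/
def APTA.region {L A X AP : Type} (𝒜 : APTA L A X AP) : RAPA (L × Val X) A X AP where
  init := 𝒜.regionPre.init
  V := 𝒜.regionPre.V
  T := fun s v a φ => if 𝒜.regionPre.Reach s then 𝒜.regionPre.T s v a φ else B3.bot

/-- The operator `𝒯` interpreting a PA over the alphabet
`Θ(X) × A × (2^X)^S` as a PTA. -/
def RPA.toPTA {S A X AP : Type} (P : RPA S A X AP) : PTA S A X AP where
  init := P.init
  V := P.V
  T := fun s g a μ => ∃ v, g = {v} ∧ P.T s v a μ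

/-! ### Normal form -/

/-- The PTA `(𝒯 ∘ R)(M)` (fused). -/
def PTA.nf {L A X AP : Type} (M : PTA L A X AP) : PTA (L × Val X) A X AP where
  init := (M.init, valZero X)
  V := fun s => M.V s.1
  T := fun s g a μ' => ∃ g₀ μ t, M.T s.1 g₀ a μ ∧ valShift s.2 t ∈ g₀ ∧
        g = {valShift s.2 t} ∧
        μ' = μ.map (fun p => (p.1, (p.2, valReset (valShift s.2 t) p.1)))

/-- Reachability of locations in a PTA. -/
inductive PTA.ReachLoc {L A X AP : Type} (M : PTA L A X AP) : L → Prop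
  | init : PTA.ReachLoc M M.init
  | step {l : L} {g : Guard X} {a : A} {μ : PMF (Set X × L)} {Y : Set X} {l' : L} :
      PTA.ReachLoc M l → M.T l g a μ → μ (Y, l') ≠ 0 → PTA.ReachLoc M l'

/-- A PTA is in normal form iff it is isomorphic to the reachable part
of `(𝒯 ∘ R)(M)`. -/
def PTA.NormalForm {L A X AP : Type} (M : PTA L A X AP) : Prop :=
  ∃ e : L → L × Val X, Function.Injective e ∧
    (∀ s, M.nf.ReachLoc s ↔ s ∈ Set.range e) ∧
    e M.init = M.nf.init ∧
    (∀ l, M.V l = M.nf.V (e l)) ∧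
    (∀ l g a μ, M.T l g a μ ↔ M.nf.T (e l) g a (μ.map (Prod.map id e)))

/-! ### The lifting `⋐_R` of a relation to distributions -/

/-- `μ ⋐_R μ'`: lifting of `R` to distributions over reset-set/state
pairs, via a correspondence (weight) function. -/
def distLift {X S S' : Type} (R : S → S' → Prop)
    (μ : PMF (Set X × S)) (μ' : PMF (Set X × S')) : Prop :=
  ∃ δ : Set X × S → Set X × S' → ℝ≥0∞,
    (∀ p, μ p ≠ 0 → ∑' q, δ p q = 1) ∧
    (∀ q, μ' q = ∑' p, μ p * δ p q) ∧
    (∀ p q, δ p q ≠ 0 → p.1 = q.1 ∧ R p.2 q.2)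

/-- Lifting with a fixed correspondence function (used for strong
refinement). -/
def distLiftVia {X S S' : Type} (R : S → S' → Prop)
    (δ : Set X × S → Set X × S' → ℝ≥0∞)
    (μ : PMF (Set X × S)) (μ' : PMF (Set X × S')) : Prop :=
  (∀ q, μ' q = ∑' p, μ p * δ p q) ∧
  (∀ p q, δ p q ≠ 0 → p.1 = q.1 ∧ R p.2 q.2)

/-! ### APA satisfaction and refinement (at the region level) -/

/-- Satisfaction relation between a PA and an APA. -/
def RPA.SatRel {S S' A X AP : Type} (M : RPA S A X AP) (N : RAPA S' A X AP)
    (R : S → S' → Prop) : Prop :=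
  ∀ s s', R s s' →
    ((∀ v a φ', N.T s' v a φ' = B3.must →
        ∃ μ, M.T s v a μ ∧ ∃ μ' ∈ φ', distLift R μ μ') ∧
     (∀ v a μ, M.T s v a μ →
        ∃ φ', N.T s' v a φ' ≠ B3.bot ∧ ∃ μ' ∈ φ', distLift R μ μ') ∧
     M.V s ∈ N.V s')

/-- `M ⊨ N` for a PA `M` and an APA `N`. -/
def RPA.Sat {S S' A X AP : Type} (M : RPA S A X AP) (N : RAPA S' A X AP) : Prop :=
  ∃ R, M.SatRel N R ∧ R M.init N.init

/-- Weak refinement relation between APAs. -/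
def RAPA.WeakRefRel {S1 S2 A X AP : Type} (N1 : RAPA S1 A X AP) (N2 : RAPA S2 A X AP)
    (R : S1 → S2 → Prop) : Prop :=
  ∀ s1 s2, R s1 s2 →
    ((∀ v a φ2, N2.T s2 v a φ2 = B3.must →
        ∃ φ1, N1.T s1 v a φ1 = B3.must ∧ ∀ μ1 ∈ φ1, ∃ μ2 ∈ φ2, distLift R μ1 μ2) ∧
     (∀ v a φ1, N1.T s1 v a φ1 ≠ B3.bot →
        ∃ φ2, N2.T s2 v a φ2 ≠ B3.bot ∧ ∀ μ1 ∈ φ1, ∃ μ2 ∈ φ2, distLift R μ1 μ2) ∧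
     N1.V s1 ⊆ N2.V s2)

/-- Weak refinement `N1 ≼_W N2` of APAs. -/
def RAPA.WeakRef {S1 S2 A X AP : Type} (N1 : RAPA S1 A X AP) (N2 : RAPA S2 A X AP) : Prop :=
  ∃ R, N1.WeakRefRel N2 R ∧ R N1.init N2.init

/-- Strong refinement relation between APAs: the correspondence
function is fixed per pair of transitions, uniformly over all
distributions. -/
def RAPA.StrongRefRel {S1 S2 A X AP : Type} (N1 : RAPA S1 A X AP) (N2 : RAPA S2 A X AP)
    (R : S1 → S2 → Prop) : Prop :=
  ∀ s1 s2, R s1 s2 →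
    ((∀ v a φ2, N2.T s2 v a φ2 = B3.must →
        ∃ φ1, N1.T s1 v a φ1 = B3.must ∧
          ∃ δ, (∀ p, ∑' q, δ p q = 1) ∧
            ∀ μ1 ∈ φ1, ∃ μ2 ∈ φ2, distLiftVia R δ μ1 μ2) ∧
     (∀ v a φ1, N1.T s1 v a φ1 ≠ B3.bot →
        ∃ φ2, N2.T s2 v a φ2 ≠ B3.bot ∧
          ∃ δ, (∀ p, ∑' q, δ p q = 1) ∧
            ∀ μ1 ∈ φ1, ∃ μ2 ∈ φ2, distLiftVia R δ μ1 μ2) ∧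
     N1.V s1 ⊆ N2.V s2)

/-- Strong refinement `N1 ≼_S N2` of APAs. -/
def RAPA.StrongRef {S1 S2 A X AP : Type} (N1 : RAPA S1 A X AP) (N2 : RAPA S2 A X AP) : Prop :=
  ∃ R, N1.StrongRefRel N2 R ∧ R N1.init N2.init

/-- Mutual weak refinement `≡`. -/
def RAPA.Equiv {S1 S2 A X AP : Type} (N1 : RAPA S1 A X AP) (N2 : RAPA S2 A X AP) : Prop :=
  N1.WeakRef N2 ∧ N2.WeakRef N1

/-! ### APTA satisfaction and refinements -/

/-- Satisfaction relation between a PTA in normal form and an APTA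
(Def. "APTA Satisfaction"). -/
def APTA.SatRel {L L' A X AP : Type} (M : PTA L A X AP) (𝒜 : APTA L' A X AP)
    (R : L → L' → Prop) : Prop :=
  ∀ l l', R l l' →
    ((∀ (a : A) (φ' : Set (PMF (Set X × L'))) (g : Guard X) (θ : Val X),
        𝒜.T l' g a φ' = B3.must →
        M.regionPre.Reach (l, θ) → 𝒜.regionPre.Reach (l', θ) →
        ∃ (n : ℕ) (gs : Fin n → Guard X) (μs : Fin n → PMF (Set X × L)),
          (∀ t : ℝ≥0, valShift θ t ∈ g → ∃ i, valShift θ t ∈ gs i) ∧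
          (∀ i, M.T l (gs i) a (μs i) ∧ ∃ μ' ∈ φ', distLift R (μs i) μ')) ∧
     (∀ (a : A) (μ : PMF (Set X × L)) (g : Guard X),
        M.T l g a μ →
        ∃ (g' : Guard X) (φ' : Set (PMF (Set X × L'))),
          𝒜.T l' g' a φ' ≠ B3.bot ∧ g ⊆ g' ∧ ∃ μ' ∈ φ', distLift R μ μ') ∧
     M.V l ∈ 𝒜.V l')

/-- `M ⊨ 𝒜` for a PTA `M` and an APTA `𝒜`. -/
def APTA.Sat {L L' A X AP : Type} (M : PTA L A X AP) (𝒜 : APTA L' A X AP) : Prop :=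
  ∃ R, APTA.SatRel M 𝒜 R ∧ R M.init 𝒜.init

/-- An implementation of an APTA is a PTA in normal form satisfying it. -/
def APTA.Implements {L L' A X AP : Type} (M : PTA L A X AP) (𝒜 : APTA L' A X AP) : Prop :=
  M.NormalForm ∧ APTA.Sat M 𝒜

/-- Thorough refinement `𝒜1 ≼_T 𝒜2`: inclusion of implementation sets. -/
def APTA.Thorough {L1 L2 A X AP : Type} (𝒜1 : APTA L1 A X AP) (𝒜2 : APTA L2 A X AP) : Prop :=
  ∀ (L' : Type) (M : PTA L' A X AP), APTA.Implements M 𝒜1 → APTA.Implements M 𝒜2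

/-- Weak refinement `𝒜1 ≼_W 𝒜2` of APTAs: weak refinement of the region APAs. -/
def APTA.WeakRef {L1 L2 A X AP : Type} (𝒜1 : APTA L1 A X AP) (𝒜2 : APTA L2 A X AP) : Prop :=
  RAPA.WeakRef 𝒜1.region 𝒜2.region

/-- Strong refinement `𝒜1 ≼_S 𝒜2` of APTAs: strong refinement of the region APAs. -/
def APTA.StrongRef {L1 L2 A X AP : Type} (𝒜1 : APTA L1 A X AP) (𝒜2 : APTA L2 A X AP) : Prop :=
  RAPA.StrongRef 𝒜1.region 𝒜2.region

/-! ### Consistency and pruning -/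

/-- A location is consistent if its admissible labeling is nonempty and
all must-edges from it have satisfiable constraints. -/
def APTA.ConsistentLoc {L A X AP : Type} (𝒜 : APTA L A X AP) (l : L) : Prop :=
  𝒜.V l ≠ ∅ ∧ ∀ g a φ, 𝒜.T l g a φ = B3.must → φ.Nonempty

/-- Restricting a constraint to distributions that avoid inconsistent
locations. -/
def APTA.pruneConstraint {L A X AP : Type} (𝒜 : APTA L A X AP)
    (φ : Set (PMF (Set X × L))) : Set (PMF (Set X × L)) :=
  {μ ∈ φ | ∀ Y l', ¬ 𝒜.ConsistentLoc l' → μ (Y, l') = 0}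

/-- The pruning operator `β`. -/
def APTA.prune {L A X AP : Type} (𝒜 : APTA L A X AP) : APTA L A X AP where
  init := 𝒜.init
  V := fun l => if 𝒜.ConsistentLoc l then 𝒜.V l else ∅
  T := fun l g a φ' =>
    if 𝒜.ConsistentLoc l ∧ ∃ φ, 𝒜.T l g a φ = B3.must ∧ φ' = 𝒜.pruneConstraint φ
    then B3.must
    else if 𝒜.ConsistentLoc l ∧ ∃ φ, 𝒜.T l g a φ = B3.may ∧ φ' = 𝒜.pruneConstraint φ
    then B3.may
    else B3.bot

/-- `β*`: the fixpoint of `β`, reached after finitely many iterations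
(at most `|L| + 1`). -/
def APTA.pruneStar {L A X AP : Type} [Fintype L] (𝒜 : APTA L A X AP) : APTA L A X AP :=
  (fun B : APTA L A X AP => B.prune)^[Fintype.card L + 1] 𝒜

/-! ### Time divergence -/

/-- Infinite paths of a PTA. -/
structure PTA.InfPath {L A X AP : Type} (M : PTA L A X AP) where
  loc : ℕ → L
  val : ℕ → Val X
  del : ℕ → ℝ≥0
  init_loc : loc 0 = M.init
  init_val : val 0 = valZero X
  step : ∀ n, ∃ g a μ Y, M.T (loc n) g a μ ∧ valShift (val n) (del n) ∈ g ∧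
    μ (Y, loc (n + 1)) ≠ 0 ∧ val (n + 1) = valReset (valShift (val n) (del n)) Y

/-- Strict divergence: time diverges along every infinite path. -/
def PTA.StrictDivergent {L A X AP : Type} (M : PTA L A X AP) : Prop :=
  ∀ π : M.InfPath, ∀ c : ℝ≥0, ∃ n, c < ∑ i ∈ Finset.range n, π.del i

/-- Schedulers: given the history (configurations and delays) and the
current configuration, choose a delay and a probabilistic edge. -/
def Sched (L A X : Type) :=
  List ((L × Val X) × ℝ≥0) → (L × Val X) → ℝ≥0 × Guard X × A × PMF (Set X × L)

/-- A scheduler is valid if it always chooses an enabled edge of `M`. -/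
def ValidSched {L A X AP : Type} (M : PTA L A X AP) (σ : Sched L A X) : Prop :=
  ∀ h c, M.T c.1 (σ h c).2.1 (σ h c).2.2.1 (σ h c).2.2.2 ∧
    valShift c.2 (σ h c).1 ∈ (σ h c).2.1

/-- One scheduler step. -/
def schedStep {L A X : Type} (σ : Sched L A X)
    (x : List ((L × Val X) × ℝ≥0) × (L × Val X)) :
    PMF (List ((L × Val X) × ℝ≥0) × (L × Val X)) :=
  ((σ x.1 x.2).2.2.2).map fun p =>
    (x.1 ++ [(x.2, (σ x.1 x.2).1)], (p.2, valReset (valShift x.2.2 (σ x.1 x.2).1) p.1))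

/-- The distribution over histories after `n` scheduler steps. -/
def runPMF {L A X AP : Type} (M : PTA L A X AP) (σ : Sched L A X) :
    ℕ → PMF (List ((L × Val X) × ℝ≥0) × (L × Val X))
  | 0 => PMF.pure ([], (M.init, valZero X))
  | n + 1 => (runPMF M σ n).bind (schedStep σ)

/-- Total time elapsed along a history. -/
def elapsed {L X : Type} (h : List ((L × Val X) × ℝ≥0)) : ℝ≥0 :=
  (h.map Prod.snd).sum

/-- Probabilistic divergence: under every (valid) scheduler, time
diverges with probability 1; equivalently, for every bound `c` the
probability that at most `c` time units have elapsed after `n` steps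
tends to `0`. -/
def PTA.ProbDivergent {L A X AP : Type} (M : PTA L A X AP) : Prop :=
  ∀ σ : Sched L A X, ValidSched M σ → ∀ c : ℝ≥0,
    Filter.Tendsto (fun n => (runPMF M σ n).toOuterMeasure {x | elapsed x.1 ≤ c})
      Filter.atTop (nhds 0)

/-- Sd-thorough refinement: inclusion of the sets of strict divergent
implementations. -/
def APTA.ThoroughSd {L1 L2 A X AP : Type} (𝒜1 : APTA L1 A X AP) (𝒜2 : APTA L2 A X AP) : Prop :=
  ∀ (L' : Type) (M : PTA L' A X AP),
    (APTA.Implements M 𝒜1 ∧ M.StrictDivergent) → (APTA.Implements M 𝒜2 ∧ M.StrictDivergent)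

/-- Pd-thorough refinement: inclusion of the sets of probabilistic
divergent implementations. -/
def APTA.ThoroughPd {L1 L2 A X AP : Type} (𝒜1 : APTA L1 A X AP) (𝒜2 : APTA L2 A X AP) : Prop :=
  ∀ (L' : Type) (M : PTA L' A X AP),
    (APTA.Implements M 𝒜1 ∧ M.ProbDivergent) → (APTA.Implements M 𝒜2 ∧ M.ProbDivergent)

/-! ### PTAs as APTAs, and probabilistic time-abstracting bisimulation -/

/-- A PTA viewed as an APTA: only must-edges, point-valued labelings,
constraints with singleton satisfaction sets. -/
def PTA.toAPTA {L A X AP : Type} (M : PTA L A X AP) : APTA L A X AP where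
  init := M.init
  V := fun l => {M.V l}
  T := fun l g a φ => if ∃ μ, M.T l g a μ ∧ φ = {μ} then B3.must else B3.bot

/-- Disjoint union of two PTAs. -/
def PTA.sum {L1 L2 A X AP : Type} (M1 : PTA L1 A X AP) (M2 : PTA L2 A X AP) :
    PTA (L1 ⊕ L2) A X AP where
  init := Sum.inl M1.init
  V := Sum.elim M1.V M2.V
  T := fun l g a μ =>
    (∃ l1 μ1, l = Sum.inl l1 ∧ M1.T l1 g a μ1 ∧ μ = μ1.map (Prod.map id Sum.inl)) ∨
    (∃ l2 μ2, l = Sum.inr l2 ∧ M2.T l2 g a μ2 ∧ μ = μ2.map (Prod.map id Sum.inr))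

/-- A set of configurations is closed under an equivalence. -/
def EClosed {C : Type} (E : C → C → Prop) (s : Set C) : Prop :=
  ∀ x y, E x y → (x ∈ s ↔ y ∈ s)

/-- Probabilistic time-abstracting bisimulations on the configurations
of a PTA. -/
def PTA.IsBisim {L A X AP : Type} (M : PTA L A X AP)
    (E : (L × Val X) → (L × Val X) → Prop) : Prop :=
  Equivalence E ∧
  ∀ c c', E c c' →
    (M.V c.1 = M.V c'.1 ∧
     ∀ (g : Guard X) (a : A) (μ : PMF (Set X × L)) (t : ℝ≥0),
       M.T c.1 g a μ → valShift c.2 t ∈ g →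
       ∃ (g' : Guard X) (μ' : PMF (Set X × L)) (t' : ℝ≥0),
         M.T c'.1 g' a μ' ∧ valShift c'.2 t' ∈ g' ∧
         ∀ s : Set (L × Val X), EClosed E s →
           ((μ.map fun p => (p.2, valReset (valShift c.2 t) p.1)).toOuterMeasure s =
            (μ'.map fun p => (p.2, valReset (valShift c'.2 t') p.1)).toOuterMeasure s))

/-- `M1 ∼ M2`: probabilistic time-abstracting bisimilarity. -/
def PTA.Bisimilar {L1 L2 A X AP : Type} (M1 : PTA L1 A X AP) (M2 : PTA L2 A X AP) : Prop :=
  ∃ E, (M1.sum M2).IsBisim E ∧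
    E (Sum.inl M1.init, valZero X) (Sum.inr M2.init, valZero X)

/-! ### Determinism -/

/-- Action-determinism: transitions of a reachable region state on the
same action with different constraints have disjoint regions. -/
def APTA.ActionDet {L A X AP : Type} (𝒜 : APTA L A X AP) : Prop :=
  ∀ s v1 v2 a φ1 φ2, 𝒜.region.T s v1 a φ1 ≠ B3.bot → 𝒜.region.T s v2 a φ2 ≠ B3.bot →
    φ1 ≠ φ2 → v1 ≠ v2

/-- AP-determinism. -/
def APTA.APDet {L A X AP : Type} (𝒜 : APTA L A X AP) : Prop :=
  ∀ s v a φ, 𝒜.region.T s v a φ ≠ B3.bot →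
    ∀ μ' ∈ φ, ∀ μ'' ∈ φ, ∀ (Y' : Set X) s' (Y'' : Set X) s'', s' ≠ s'' →
      μ' (Y', s') ≠ 0 → μ'' (Y'', s'') ≠ 0 → 𝒜.region.V s' ∩ 𝒜.region.V s'' = ∅

def APTA.Deterministic {L A X AP : Type} (𝒜 : APTA L A X AP) : Prop :=
  𝒜.ActionDet ∧ 𝒜.APDet

/-! ### Abstraction for APTAs -/

/-- The common guard `g(l̃, a)` of the must-edges of all concretizations
of `l̃`. -/
def APTA.commonGuard {L Lt A X AP : Type} (𝒜 : APTA L A X AP) (α : L → Lt)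
    (lt : Lt) (a : A) : Guard X :=
  if ∀ l, α l = lt → ∃ g φ, 𝒜.T l g a φ = B3.must
  then ⋂₀ {g | ∃ l, α l = lt ∧ ∃ φ, 𝒜.T l g a φ = B3.must}
  else ∅

/-- The pre-processing `𝒫_α`: every must-edge is split along the common
guard and its computed negation. -/
def APTA.preprocess {L Lt A X AP : Type} (𝒜 : APTA L A X AP) (α : L → Lt) :
    APTA L A X AP where
  init := 𝒜.init
  V := 𝒜.V
  T := fun l g a φ =>
    if ∃ g₀, 𝒜.T l g₀ a φ = B3.must ∧
        (g = 𝒜.commonGuard α (α l) a ∨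
         ∃ g' ∈ Guard.negSet (𝒜.commonGuard α (α l) a), g = g₀ ∩ g')
    then B3.must
    else if 𝒜.T l g a φ = B3.may then B3.may
    else B3.bot

/-- APTA abstraction (applied to a pre-processed APTA). -/
def APTA.abstr {L Lt A X AP : Type} (𝒜 : APTA L A X AP) (α : L → Lt) :
    APTA Lt A X AP where
  init := α 𝒜.init
  V := fun lt => {P | ∃ l, α l = lt ∧ P ∈ 𝒜.V l}
  T := fun lt g a φt =>
    if g = 𝒜.commonGuard α lt a ∧
        φt = (fun μ => μ.map (Prod.map id α)) ''
          ⋃₀ {φ | ∃ l, α l = lt ∧ 𝒜.T l g a φ = B3.must}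
    then B3.must
    else if g ≠ 𝒜.commonGuard α lt a ∧ (∃ l φ, α l = lt ∧ 𝒜.T l g a φ ≠ B3.bot) ∧
        φt = (fun μ => μ.map (Prod.map id α)) ''
          ⋃₀ {φ | ∃ l, α l = lt ∧ 𝒜.T l g a φ ≠ B3.bot}
    then B3.may
    else B3.bot

/-- Pre-processing at the APA level. Since every transition of a region
APA is guarded by a single region, guard splitting is trivial there. -/
def RAPA.preprocess {S St A X AP : Type} (N : RAPA S A X AP) (_α : S → St) :
    RAPA S A X AP := N

/-- APA abstraction (cf. DKLLPSW11): must if all concretizations have a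
must-transition with the given label, may if some has a non-⊥ one. -/
def RAPA.abstr {S St A X AP : Type} (N : RAPA S A X AP) (α : S → St) :
    RAPA St A X AP where
  init := α N.init
  V := fun st => {P | ∃ s, α s = st ∧ P ∈ N.V s}
  T := fun st v a φt =>
    if (∀ s, α s = st → ∃ φ, N.T s v a φ = B3.must) ∧
        φt = (fun μ => μ.map (Prod.map id α)) ''
          ⋃₀ {φ | ∃ s, α s = st ∧ N.T s v a φ = B3.must}
    then B3.must
    else if ¬ (∀ s, α s = st → ∃ φ, N.T s v a φ = B3.must) ∧
        (∃ s φ, α s = st ∧ N.T s v a φ ≠ B3.bot) ∧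
        φt = (fun μ => μ.map (Prod.map id α)) ''
          ⋃₀ {φ | ∃ s, α s = st ∧ N.T s v a φ ≠ B3.bot}
    then B3.may
    else B3.bot

/-! ### Abstract probabilistic event-clock automata -/

/-- Abstract probabilistic event-clock automata: one clock `x_a` per
action `a` (so the clock set is identified with the action set `A`),
and probability constraints directly over locations. -/
structure APECA (L A AP : Type) where
  V : L → Set (Set AP)
  T : L → Guard A → A → Set (PMF L) → B3
  init : L

/-- Completeness of the edge function: for every location and action the
guards of the non-⊥ edges cover `true`. -/
def APECA.Complete {L A AP : Type} (E : APECA L A AP) : Prop :=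
  ∀ l a (v : Val A), ∃ g φ, E.T l g a φ ≠ B3.bot ∧ v ∈ g

/-- An APECA as an APTA: the occurrence of `a` resets exactly the clock
`x_a`. -/
def APECA.toAPTA {L A AP : Type} (E : APECA L A AP) : APTA L A A AP where
  init := E.init
  V := E.V
  T := fun l g a φh =>
    if ∃ φ, E.T l g a φ = B3.must ∧
        φh = (fun μ => μ.map fun l' => (({a} : Set A), l')) '' φ
    then B3.must
    else if ∃ φ, E.T l g a φ = B3.may ∧
        φh = (fun μ => μ.map fun l' => (({a} : Set A), l')) '' φ
    then B3.may
    else B3.bot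

/-- The region APA of an APECA. -/
def APECA.region {L A AP : Type} (E : APECA L A AP) : RAPA (L × Val A) A A AP :=
  E.toAPTA.region

/-- Weak refinement of APECAs: weak APA refinement of the region APAs. -/
def APECA.WeakRef {L1 L2 A AP : Type} (E1 : APECA L1 A AP) (E2 : APECA L2 A AP) : Prop :=
  RAPA.WeakRef E1.region E2.region

/-- Action-determinism for APECAs. -/
def APECA.ActionDet {L A AP : Type} (E : APECA L A AP) : Prop :=
  ∀ s v1 v2 a φ1 φ2, E.region.T s v1 a φ1 ≠ B3.bot → E.region.T s v2 a φ2 ≠ B3.bot →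
    φ1 ≠ φ2 → v1 ≠ v2

/-- Consistency: existence of at least one implementation. -/
def APECA.Consistent {L A AP : Type} (E : APECA L A AP) : Prop :=
  ∃ (L' : Type) (M : PTA L' A A AP), APTA.Implements M E.toAPTA

/-- Implementation of an APECA. -/
def APECA.Implements {L' L A AP : Type} (M : PTA L' A A AP) (E : APECA L A AP) : Prop :=
  APTA.Implements M E.toAPTA

/-- Disjointness of the atomic-proposition alphabets of two APECAs. -/
def APDisjoint {L1 L2 A AP : Type} (E1 : APECA L1 A AP) (E2 : APECA L2 A AP) : Prop :=
  ∀ l1 l2 P1 P2, P1 ∈ E1.V l1 → P2 ∈ E2.V l2 → P1 ∩ P2 = ∅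

/-! ### Conjunction -/

/-- The conjunction `φ∧` of two constraints: a distribution satisfies it
iff its marginals satisfy the component constraints. -/
def conjConstraint {L1 L2 : Type} (φ1 : Set (PMF L1)) (φ2 : Set (PMF L2)) :
    Set (PMF (L1 × L2)) :=
  {μ | μ.map Prod.fst ∈ φ1 ∧ μ.map Prod.snd ∈ φ2}

/-- Conjunction of APECAs. -/
def APECA.conj {L1 L2 A AP : Type} (E1 : APECA L1 A AP) (E2 : APECA L2 A AP) :
    APECA (L1 × L2) A AP where
  init := (E1.init, E2.init)
  V := fun p => E1.V p.1 ∩ E2.V p.2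
  T := fun p g a φ =>
    if ∃ g1 g2 φ1 φ2, E1.T p.1 g1 a φ1 ≠ B3.bot ∧ E2.T p.2 g2 a φ2 ≠ B3.bot ∧
        g = g1 ∩ g2 ∧ φ = conjConstraint φ1 φ2 ∧
        (E1.T p.1 g1 a φ1 = B3.must ∨ E2.T p.2 g2 a φ2 = B3.must)
    then B3.must
    else if ∃ g1 g2 φ1 φ2, E1.T p.1 g1 a φ1 ≠ B3.bot ∧ E2.T p.2 g2 a φ2 ≠ B3.bot ∧
        g = g1 ∩ g2 ∧ φ = conjConstraint φ1 φ2
    then B3.may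
    else B3.bot

/-- Conjunction of constraints at the region level (with reset sets). -/
def conjConstraintR {X S1 S2 : Type} (φ1 : Set (PMF (Set X × S1)))
    (φ2 : Set (PMF (Set X × S2))) : Set (PMF (Set X × (S1 × S2))) :=
  {μ | μ.map (fun p => (p.1, p.2.1)) ∈ φ1 ∧ μ.map (fun p => (p.1, p.2.2)) ∈ φ2}

/-- Conjunction of APAs (region level). -/
def RAPA.conj {S1 S2 A X AP : Type} (N1 : RAPA S1 A X AP) (N2 : RAPA S2 A X AP) :
    RAPA (S1 × S2) A X AP where
  init := (N1.init, N2.init)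
  V := fun p => N1.V p.1 ∩ N2.V p.2
  T := fun p v a φ =>
    if ∃ φ1 φ2, N1.T p.1 v a φ1 ≠ B3.bot ∧ N2.T p.2 v a φ2 ≠ B3.bot ∧
        φ = conjConstraintR φ1 φ2 ∧
        (N1.T p.1 v a φ1 = B3.must ∨ N2.T p.2 v a φ2 = B3.must)
    then B3.must
    else if ∃ φ1 φ2, N1.T p.1 v a φ1 ≠ B3.bot ∧ N2.T p.2 v a φ2 ≠ B3.bot ∧
        φ = conjConstraintR φ1 φ2
    then B3.may
    else B3.bot

/-! ### Pruning for APECAs -/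

def APECA.ConsistentLoc {L A AP : Type} (E : APECA L A AP) (l : L) : Prop :=
  E.V l ≠ ∅ ∧ ∀ g a φ, E.T l g a φ = B3.must → φ.Nonempty

def APECA.pruneConstraint {L A AP : Type} (E : APECA L A AP) (φ : Set (PMF L)) :
    Set (PMF L) :=
  {μ ∈ φ | ∀ l', ¬ E.ConsistentLoc l' → μ l' = 0}

def APECA.prune {L A AP : Type} (E : APECA L A AP) : APECA L A AP where
  init := E.init
  V := fun l => if E.ConsistentLoc l then E.V l else ∅
  T := fun l g a φ' =>
    if E.ConsistentLoc l ∧ ∃ φ, E.T l g a φ = B3.must ∧ φ' = E.pruneConstraint φ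
    then B3.must
    else if E.ConsistentLoc l ∧ ∃ φ, E.T l g a φ = B3.may ∧ φ' = E.pruneConstraint φ
    then B3.may
    else B3.bot

def APECA.pruneStar {L A AP : Type} [Fintype L] (E : APECA L A AP) : APECA L A AP :=
  (fun B : APECA L A AP => B.prune)^[Fintype.card L + 1] E

/-! ### Parallel composition -/

/-- The parallel constraint `φ∥`: product distributions of satisfying
pairs. -/
def parConstraint {L1 L2 : Type} (φ1 : Set (PMF L1)) (φ2 : Set (PMF L2)) :
    Set (PMF (L1 × L2)) :=
  {μ | ∃ μ1 ∈ φ1, ∃ μ2 ∈ φ2, ∀ k1 k2, μ (k1, k2) = μ1 k1 * μ2 k2}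

/-- Parallel composition of APECAs (over the same action set). -/
def APECA.par {L1 L2 A AP : Type} (E1 : APECA L1 A AP) (E2 : APECA L2 A AP) :
    APECA (L1 × L2) A AP where
  init := (E1.init, E2.init)
  V := fun p => {Q | ∃ P1 ∈ E1.V p.1, ∃ P2 ∈ E2.V p.2, Q = P1 ∪ P2}
  T := fun p g a φ =>
    if ∃ g1 g2 φ1 φ2, E1.T p.1 g1 a φ1 = B3.must ∧ E2.T p.2 g2 a φ2 = B3.must ∧
        g = g1 ∩ g2 ∧ φ = parConstraint φ1 φ2
    then B3.must
    else if ∃ g1 g2 φ1 φ2, E1.T p.1 g1 a φ1 ≠ B3.bot ∧ E2.T p.2 g2 a φ2 ≠ B3.bot ∧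
        g = g1 ∩ g2 ∧ φ = parConstraint φ1 φ2
    then B3.may
    else B3.bot

/-- Parallel constraint at the region level: products, with resets
combined by union. -/
def parConstraintR {X S1 S2 : Type} (φ1 : Set (PMF (Set X × S1)))
    (φ2 : Set (PMF (Set X × S2))) : Set (PMF (Set X × (S1 × S2))) :=
  {μ | ∃ μ1 ∈ φ1, ∃ μ2 ∈ φ2,
    μ = μ1.bind fun p => μ2.map fun q => (p.1 ∪ q.1, (p.2, q.2))}

/-- Parallel composition of APAs (region level). -/
def RAPA.par {S1 S2 A X AP : Type} (N1 : RAPA S1 A X AP) (N2 : RAPA S2 A X AP) :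
    RAPA (S1 × S2) A X AP where
  init := (N1.init, N2.init)
  V := fun p => {Q | ∃ P1 ∈ N1.V p.1, ∃ P2 ∈ N2.V p.2, Q = P1 ∪ P2}
  T := fun p v a φ =>
    if ∃ φ1 φ2, N1.T p.1 v a φ1 = B3.must ∧ N2.T p.2 v a φ2 = B3.must ∧
        φ = parConstraintR φ1 φ2
    then B3.must
    else if ∃ φ1 φ2, N1.T p.1 v a φ1 ≠ B3.bot ∧ N2.T p.2 v a φ2 ≠ B3.bot ∧
        φ = parConstraintR φ1 φ2
    then B3.may
    else B3.bot

/-! ### Abstraction for APECAs -/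

def APECA.commonGuard {L Lt A AP : Type} (E : APECA L A AP) (α : L → Lt)
    (lt : Lt) (a : A) : Guard A :=
  if ∀ l, α l = lt → ∃ g φ, E.T l g a φ = B3.must
  then ⋂₀ {g | ∃ l, α l = lt ∧ ∃ φ, E.T l g a φ = B3.must}
  else ∅

def APECA.preprocess {L Lt A AP : Type} (E : APECA L A AP) (α : L → Lt) :
    APECA L A AP where
  init := E.init
  V := E.V
  T := fun l g a φ =>
    if ∃ g₀, E.T l g₀ a φ = B3.must ∧
        (g = E.commonGuard α (α l) a ∨
         ∃ g' ∈ Guard.negSet (E.commonGuard α (α l) a), g = g₀ ∩ g')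
    then B3.must
    else if E.T l g a φ = B3.may then B3.may
    else B3.bot

def APECA.abstr {L Lt A AP : Type} (E : APECA L A AP) (α : L → Lt) :
    APECA Lt A AP where
  init := α E.init
  V := fun lt => {P | ∃ l, α l = lt ∧ P ∈ E.V l}
  T := fun lt g a φt =>
    if g = E.commonGuard α lt a ∧
        φt = (fun μ => μ.map α) '' ⋃₀ {φ | ∃ l, α l = lt ∧ E.T l g a φ = B3.must}
    then B3.must
    else if g ≠ E.commonGuard α lt a ∧ (∃ l φ, α l = lt ∧ E.T l g a φ ≠ B3.bot) ∧
        φt = (fun μ => μ.map α) '' ⋃₀ {φ | ∃ l, α l = lt ∧ E.T l g a φ ≠ B3.bot}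
    then B3.may
    else B3.bot

end

/-!
Regions are single clock valuations, so a region transition of an implementation at `v` is a
delay to `v` followed by an edge enabled at `v`. Strong refinement matches such transitions in
both directions (the may-clause for `M1`, the must-clause for `M2`) through one correspondence
function `δ` with rows summing to one. Pushing mass through `δ` shows that matched target
distributions agree on every set closed under the equivalence generated by the refinement
relation, which is therefore a time-abstracting bisimulation on the disjoint union.

Conversely, a PTA firing once when its clock reads `1` and one firing when it reads `2` are
bisimilar (the equivalence "both can still fire" works, as delays are abstracted), but their
region automata fire at different valuations, so strong refinement fails at the initial states.
-/

noncomputable section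

section RegionOfPTA

variable {L A X AP : Type}

def liftDist (v : Val X) (μ : PMF (Set X × L)) : PMF (Set X × (L × Val X)) :=
  μ.map fun p => (p.1, (p.2, valReset v p.1))

def PTA.RegionEdge (M : PTA L A X AP) (s : L × Val X) (v : Val X) (a : A)
    (μ : PMF (Set X × L)) : Prop :=
  ∃ g t, M.T s.1 g a μ ∧ v = valShift s.2 t ∧ v ∈ g

variable (M : PTA L A X AP)

theorem PTA.toAPTA_T_eq_must_iff {l : L} {g : Guard X} {a : A} {φ : Set (PMF (Set X × L))} :
    M.toAPTA.T l g a φ = B3.must ↔ ∃ μ, M.T l g a μ ∧ φ = {μ} := by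
  simp only [PTA.toAPTA]
  split_ifs with h <;> simp [h]

theorem PTA.toAPTA_T_ne_bot_iff {l : L} {g : Guard X} {a : A} {φ : Set (PMF (Set X × L))} :
    M.toAPTA.T l g a φ ≠ B3.bot ↔ M.toAPTA.T l g a φ = B3.must := by
  simp only [PTA.toAPTA]
  split_ifs <;> simp

theorem PTA.toAPTA_regionPre_T (s : L × Val X) (v : Val X) (a : A)
    (φ : Set (PMF (Set X × (L × Val X)))) :
    M.toAPTA.regionPre.T s v a φ =
      if ∃ μ, M.RegionEdge s v a μ ∧ φ = {liftDist v μ} then B3.must else B3.bot := by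
  have hcond : (∃ g φ₀ t, M.toAPTA.T s.1 g a φ₀ = B3.must ∧ v = valShift s.2 t ∧ v ∈ g ∧
      φ = liftConstraint v φ₀) ↔ ∃ μ, M.RegionEdge s v a μ ∧ φ = {liftDist v μ} := by
    simp only [PTA.toAPTA_T_eq_must_iff]
    constructor
    · rintro ⟨g, _, t, ⟨μ, hμ, rfl⟩, hv, hg, rfl⟩
      exact ⟨μ, ⟨g, t, hμ, hv, hg⟩, Set.image_singleton⟩
    · rintro ⟨μ, ⟨g, t, hμ, hv, hg⟩, rfl⟩
      exact ⟨g, {μ}, t, ⟨μ, hμ, rfl⟩, hv, hg, Set.image_singleton.symm⟩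
  simp only [APTA.regionPre, PTA.toAPTA_T_ne_bot_iff, hcond]
  split_ifs <;> rfl

theorem PTA.toAPTA_region_T_eq_must_iff {s : L × Val X} {v : Val X} {a : A}
    {φ : Set (PMF (Set X × (L × Val X)))} :
    M.toAPTA.region.T s v a φ = B3.must ↔
      M.toAPTA.regionPre.Reach s ∧ ∃ μ, M.RegionEdge s v a μ ∧ φ = {liftDist v μ} := by
  simp only [APTA.region, PTA.toAPTA_regionPre_T]
  split_ifs <;> simp_all

theorem PTA.toAPTA_region_T_ne_bot_iff {s : L × Val X} {v : Val X} {a : A}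
    {φ : Set (PMF (Set X × (L × Val X)))} :
    M.toAPTA.region.T s v a φ ≠ B3.bot ↔
      M.toAPTA.regionPre.Reach s ∧ ∃ μ, M.RegionEdge s v a μ ∧ φ = {liftDist v μ} := by
  simp only [APTA.region, PTA.toAPTA_regionPre_T]
  split_ifs <;> simp_all

variable {M}

theorem PTA.RegionEdge.reach_of_liftDist_ne_zero {s : L × Val X} {v : Val X} {a : A}
    {μ : PMF (Set X × L)} (h : M.RegionEdge s v a μ) (hs : M.toAPTA.regionPre.Reach s)
    {q : Set X × (L × Val X)} (hq : liftDist v μ q ≠ 0) : M.toAPTA.regionPre.Reach q.2 :=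
  RAPA.Reach.step hs
    (by rw [PTA.toAPTA_regionPre_T, if_pos ⟨μ, h, rfl⟩]; exact B3.noConfusion)
    (Set.mem_singleton _) hq

end RegionOfPTA

theorem PMF.toOuterMeasure_eq_of_correspondence {α β : Type*} {ν1 : PMF α} {ν2 : PMF β}
    (δ : α → β → ℝ≥0∞) (hrow : ∀ p, ν1 p ≠ 0 → ∑' q, δ p q = 1)
    (hcol : ∀ q, ν2 q = ∑' p, ν1 p * δ p q) {s1 : Set α} {s2 : Set β}
    (hs : ∀ p q, ν1 p ≠ 0 → δ p q ≠ 0 → (p ∈ s1 ↔ q ∈ s2)) :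
    ν1.toOuterMeasure s1 = ν2.toOuterMeasure s2 := by
  have hsplit : ∀ p, s1.indicator ν1 p = ∑' q, ν1 p * s2.indicator (δ p) q := by
    intro p
    by_cases hp : ν1 p = 0
    · simp [hp]
    have hind : ∀ q, s2.indicator (δ p) q = s1.indicator (fun _ => δ p q) p := by
      intro q
      by_cases hq : δ p q = 0
      · simp [Set.indicator_apply, hq]
      · simp [Set.indicator_apply, hs p q hp hq]
    by_cases hp1 : p ∈ s1
    · simp [hind, hp1, ENNReal.tsum_mul_left, hrow p hp]
    · simp [hind, hp1]
  rw [PMF.toOuterMeasure_apply, PMF.toOuterMeasure_apply, tsum_congr hsplit, ENNReal.tsum_comm]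
  refine tsum_congr fun q => ?_
  by_cases hq : q ∈ s2 <;> simp [hq, hcol]

theorem PMF.map_prodMap_map_reset {X L L' : Type} (f : L → L') (v : Val X)
    (μ : PMF (Set X × L)) :
    (μ.map (Prod.map id f)).map (fun p => (p.2, valReset v p.1)) =
      (liftDist v μ).map fun q => (f q.2.1, q.2.2) := by
  simp only [liftDist, PMF.map_comp]
  rfl

section Sum

variable {L1 L2 A X AP : Type} (M1 : PTA L1 A X AP) (M2 : PTA L2 A X AP)

theorem PTA.sum_T_inl {l : L1} {g : Guard X} {a : A} {μ : PMF (Set X × (L1 ⊕ L2))} :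
    (M1.sum M2).T (Sum.inl l) g a μ ↔ ∃ μ1, M1.T l g a μ1 ∧ μ = μ1.map (Prod.map id Sum.inl) := by
  simp [PTA.sum]

theorem PTA.sum_T_inr {l : L2} {g : Guard X} {a : A} {μ : PMF (Set X × (L1 ⊕ L2))} :
    (M1.sum M2).T (Sum.inr l) g a μ ↔ ∃ μ2, M2.T l g a μ2 ∧ μ = μ2.map (Prod.map id Sum.inr) := by
  simp [PTA.sum]

end Sum

section Bisimulation

variable {L A X AP : Type} {M : PTA L A X AP} {E : (L × Val X) → (L × Val X) → Prop}

variable (M E) in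
/-- The transfer condition of `PTA.IsBisim`. -/
def PTA.Transfer (c c' : L × Val X) : Prop :=
  M.V c.1 = M.V c'.1 ∧
  ∀ (g : Guard X) (a : A) (μ : PMF (Set X × L)) (t : ℝ≥0),
    M.T c.1 g a μ → valShift c.2 t ∈ g →
    ∃ (g' : Guard X) (μ' : PMF (Set X × L)) (t' : ℝ≥0),
      M.T c'.1 g' a μ' ∧ valShift c'.2 t' ∈ g' ∧
      ∀ s : Set (L × Val X), EClosed E s →
        ((μ.map fun p => (p.2, valReset (valShift c.2 t) p.1)).toOuterMeasure s =
         (μ'.map fun p => (p.2, valReset (valShift c'.2 t') p.1)).toOuterMeasure s)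

theorem PTA.Transfer.refl (c : L × Val X) : M.Transfer E c c :=
  ⟨rfl, fun g _ μ t hT hv => ⟨g, μ, t, hT, hv, fun _ _ => rfl⟩⟩

theorem PTA.Transfer.trans {c c' c'' : L × Val X} (h : M.Transfer E c c')
    (h' : M.Transfer E c' c'') : M.Transfer E c c'' := by
  refine ⟨h.1.trans h'.1, fun g a μ t hT hv => ?_⟩
  obtain ⟨g', μ', t', hT', hv', hμ'⟩ := h.2 g a μ t hT hv
  obtain ⟨g'', μ'', t'', hT'', hv'', hμ''⟩ := h'.2 g' a μ' t' hT' hv'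
  exact ⟨g'', μ'', t'', hT'', hv'', fun s hs => (hμ' s hs).trans (hμ'' s hs)⟩

theorem PTA.isBisim_eqvGen {B : (L × Val X) → (L × Val X) → Prop}
    (hB : ∀ c c', B c c' →
      M.Transfer (Relation.EqvGen B) c c' ∧ M.Transfer (Relation.EqvGen B) c' c) :
    M.IsBisim (Relation.EqvGen B) := by
  have hboth : ∀ c c', Relation.EqvGen B c c' →
      M.Transfer (Relation.EqvGen B) c c' ∧ M.Transfer (Relation.EqvGen B) c' c := by
    intro c c' hcc
    induction hcc with
    | rel c c' h => exact hB c c' h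
    | refl c => exact ⟨.refl c, .refl c⟩
    | symm c c' _ ih => exact ih.symm
    | trans c c' c'' _ _ ih ih' => exact ⟨ih.1.trans ih'.1, ih'.2.trans ih.2⟩
  exact ⟨Relation.EqvGen.is_equivalence B, fun c c' hcc => (hboth c c' hcc).1⟩

end Bisimulation

section StrongRefinement

variable {L1 L2 A X AP : Type} {M1 : PTA L1 A X AP} {M2 : PTA L2 A X AP}
  {R : (L1 × Val X) → (L2 × Val X) → Prop}

def StrongLift {S1 S2 : Type} (R : S1 → S2 → Prop) (ν1 : PMF (Set X × S1))
    (ν2 : PMF (Set X × S2)) : Prop :=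
  ∃ δ, (∀ p, ∑' q, δ p q = 1) ∧ distLiftVia R δ ν1 ν2

theorem labels_eq_of_strongRefRel (hR : RAPA.StrongRefRel M1.toAPTA.region M2.toAPTA.region R)
    {x : L1 × Val X} {y : L2 × Val X} (hxy : R x y) : M1.V x.1 = M2.V y.1 :=
  Set.singleton_subset_singleton.1 (hR x y hxy).2.2

theorem exists_regionEdge_of_strongRefRel_left
    (hR : RAPA.StrongRefRel M1.toAPTA.region M2.toAPTA.region R)
    {x : L1 × Val X} {y : L2 × Val X} (hxy : R x y) (hx : M1.toAPTA.regionPre.Reach x)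
    {v : Val X} {a : A} {μ1 : PMF (Set X × L1)} (h1 : M1.RegionEdge x v a μ1) :
    ∃ μ2, M2.RegionEdge y v a μ2 ∧ StrongLift R (liftDist v μ1) (liftDist v μ2) := by
  have hN1 : M1.toAPTA.region.T x v a {liftDist v μ1} ≠ B3.bot :=
    (PTA.toAPTA_region_T_ne_bot_iff M1).2 ⟨hx, μ1, h1, rfl⟩
  obtain ⟨φ2, hN2, δ, hrow, hmatch⟩ := (hR x y hxy).2.1 v a _ hN1
  obtain ⟨-, μ2, h2, rfl⟩ := (PTA.toAPTA_region_T_ne_bot_iff M2).1 hN2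
  obtain ⟨ν2, hν2, hlift⟩ := hmatch _ rfl
  rw [Set.mem_singleton_iff] at hν2
  exact ⟨μ2, h2, δ, hrow, hν2 ▸ hlift⟩

theorem exists_regionEdge_of_strongRefRel_right
    (hR : RAPA.StrongRefRel M1.toAPTA.region M2.toAPTA.region R)
    {x : L1 × Val X} {y : L2 × Val X} (hxy : R x y) (hy : M2.toAPTA.regionPre.Reach y)
    {v : Val X} {a : A} {μ2 : PMF (Set X × L2)} (h2 : M2.RegionEdge y v a μ2) :
    ∃ μ1, M1.RegionEdge x v a μ1 ∧ StrongLift R (liftDist v μ1) (liftDist v μ2) := by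
  have hN2 : M2.toAPTA.region.T y v a {liftDist v μ2} = B3.must :=
    (PTA.toAPTA_region_T_eq_must_iff M2).2 ⟨hy, μ2, h2, rfl⟩
  obtain ⟨φ1, hN1, δ, hrow, hmatch⟩ := (hR x y hxy).1 v a _ hN2
  obtain ⟨-, μ1, h1, rfl⟩ := (PTA.toAPTA_region_T_eq_must_iff M1).1 hN1
  obtain ⟨ν2, hν2, hlift⟩ := hmatch _ rfl
  rw [Set.mem_singleton_iff] at hν2
  exact ⟨μ1, h1, δ, hrow, hν2 ▸ hlift⟩

variable (M1 M2 R) in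
/-- Restricted to reachable states, since the region automata have no transitions elsewhere. -/
def strongRefBase : ((L1 ⊕ L2) × Val X) → ((L1 ⊕ L2) × Val X) → Prop :=
  fun c c' => ∃ x y, R x y ∧ M1.toAPTA.regionPre.Reach x ∧ M2.toAPTA.regionPre.Reach y ∧
    c = (Sum.inl x.1, x.2) ∧ c' = (Sum.inr y.1, y.2)

theorem toOuterMeasure_targets_eq_of_strongLift
    {E : ((L1 ⊕ L2) × Val X) → ((L1 ⊕ L2) × Val X) → Prop}
    (hE : ∀ c c', strongRefBase M1 M2 R c c' → E c c')
    {x : L1 × Val X} {y : L2 × Val X} (hx : M1.toAPTA.regionPre.Reach x)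
    (hy : M2.toAPTA.regionPre.Reach y) {v : Val X} {a : A}
    {μ1 : PMF (Set X × L1)} {μ2 : PMF (Set X × L2)}
    (h1 : M1.RegionEdge x v a μ1) (h2 : M2.RegionEdge y v a μ2)
    (hlift : StrongLift R (liftDist v μ1) (liftDist v μ2))
    {s : Set ((L1 ⊕ L2) × Val X)} (hs : EClosed E s) :
    ((μ1.map (Prod.map id Sum.inl)).map fun p => (p.2, valReset v p.1)).toOuterMeasure s =
      ((μ2.map (Prod.map id Sum.inr)).map fun p => (p.2, valReset v p.1)).toOuterMeasure s := by
  obtain ⟨δ, hrow, hcol, hrel⟩ := hlift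
  rw [PMF.map_prodMap_map_reset, PMF.map_prodMap_map_reset, PMF.toOuterMeasure_map_apply,
    PMF.toOuterMeasure_map_apply]
  refine PMF.toOuterMeasure_eq_of_correspondence δ (fun p _ => hrow p) hcol
    fun p q hp hpq => hs _ _ (hE _ _ ⟨p.2, q.2, (hrel p q hpq).2, ?_, ?_, rfl, rfl⟩)
  · exact h1.reach_of_liftDist_ne_zero hx hp
  · refine h2.reach_of_liftDist_ne_zero hy ?_
    rw [hcol]
    exact fun h0 => mul_ne_zero hp hpq (ENNReal.tsum_eq_zero.1 h0 p)

theorem transfer_inl_inr_of_strongRefRel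
    {E : ((L1 ⊕ L2) × Val X) → ((L1 ⊕ L2) × Val X) → Prop}
    (hR : RAPA.StrongRefRel M1.toAPTA.region M2.toAPTA.region R)
    (hE : ∀ c c', strongRefBase M1 M2 R c c' → E c c')
    {x : L1 × Val X} {y : L2 × Val X} (hxy : R x y) (hx : M1.toAPTA.regionPre.Reach x)
    (hy : M2.toAPTA.regionPre.Reach y) :
    (M1.sum M2).Transfer E (Sum.inl x.1, x.2) (Sum.inr y.1, y.2) := by
  refine ⟨labels_eq_of_strongRefRel hR hxy, fun g a μ t hT hv => ?_⟩
  obtain ⟨μ1, hT1, rfl⟩ := (PTA.sum_T_inl M1 M2).1 hT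
  have h1 : M1.RegionEdge x (valShift x.2 t) a μ1 := ⟨g, t, hT1, rfl, hv⟩
  obtain ⟨μ2, h2, hlift⟩ := exists_regionEdge_of_strongRefRel_left hR hxy hx h1
  obtain ⟨g2, t2, hT2, hv2, hg2⟩ := h2
  refine ⟨g2, _, t2, (PTA.sum_T_inr M1 M2).2 ⟨μ2, hT2, rfl⟩, hv2 ▸ hg2, fun s hs => ?_⟩
  rw [← hv2]
  exact toOuterMeasure_targets_eq_of_strongLift hE hx hy h1 ⟨g2, t2, hT2, hv2, hg2⟩ hlift hs

theorem transfer_inr_inl_of_strongRefRel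
    {E : ((L1 ⊕ L2) × Val X) → ((L1 ⊕ L2) × Val X) → Prop}
    (hR : RAPA.StrongRefRel M1.toAPTA.region M2.toAPTA.region R)
    (hE : ∀ c c', strongRefBase M1 M2 R c c' → E c c')
    {x : L1 × Val X} {y : L2 × Val X} (hxy : R x y) (hx : M1.toAPTA.regionPre.Reach x)
    (hy : M2.toAPTA.regionPre.Reach y) :
    (M1.sum M2).Transfer E (Sum.inr y.1, y.2) (Sum.inl x.1, x.2) := by
  refine ⟨(labels_eq_of_strongRefRel hR hxy).symm, fun g a μ t hT hv => ?_⟩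
  obtain ⟨μ2, hT2, rfl⟩ := (PTA.sum_T_inr M1 M2).1 hT
  have h2 : M2.RegionEdge y (valShift y.2 t) a μ2 := ⟨g, t, hT2, rfl, hv⟩
  obtain ⟨μ1, h1, hlift⟩ := exists_regionEdge_of_strongRefRel_right hR hxy hy h2
  obtain ⟨g1, t1, hT1, hv1, hg1⟩ := h1
  refine ⟨g1, _, t1, (PTA.sum_T_inl M1 M2).2 ⟨μ1, hT1, rfl⟩, hv1 ▸ hg1, fun s hs => ?_⟩
  rw [← hv1]
  exact (toOuterMeasure_targets_eq_of_strongLift hE hx hy ⟨g1, t1, hT1, hv1, hg1⟩ h2 hlift hs).symm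

end StrongRefinement

theorem PTA.bisimilar_of_strongRef {L1 L2 A X AP : Type} {M1 : PTA L1 A X AP}
    {M2 : PTA L2 A X AP} (h : APTA.StrongRef M1.toAPTA M2.toAPTA) : M1.Bisimilar M2 := by
  obtain ⟨R, hR, hinit⟩ := h
  have hE : ∀ c c', strongRefBase M1 M2 R c c' → Relation.EqvGen (strongRefBase M1 M2 R) c c' :=
    fun _ _ => .rel _ _
  refine ⟨Relation.EqvGen (strongRefBase M1 M2 R), PTA.isBisim_eqvGen fun c c' hcc => ?_,
    .rel _ _ ⟨_, _, hinit, .init, .init, rfl, rfl⟩⟩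
  obtain ⟨x, y, hxy, hx, hy, rfl, rfl⟩ := hcc
  exact ⟨transfer_inl_inr_of_strongRefRel hR hE hxy hx hy,
    transfer_inr_inl_of_strongRefRel hR hE hxy hx hy⟩

section Counterexample

def PTA.CanFire {L A X AP : Type} (M : PTA L A X AP) (c : L × Val X) (a : A) : Prop :=
  ∃ g μ t, M.T c.1 g a μ ∧ valShift c.2 t ∈ g

theorem PMF.toOuterMeasure_pure_eq_of_eClosed {C : Type} {E : C → C → Prop} {z z' : C}
    (h : E z z') {s : Set C} (hs : EClosed E s) :
    (PMF.pure z).toOuterMeasure s = (PMF.pure z').toOuterMeasure s := by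
  simp only [PMF.toOuterMeasure_pure_apply, hs z z' h]

theorem PTA.isBisim_canFire_iff {L A X AP : Type} (M : PTA L A X AP)
    (hV : ∀ l l', M.V l = M.V l')
    (hdead : ∀ (c : L × Val X) (g : Guard X) (a : A) (μ : PMF (Set X × L)) (t : ℝ≥0), M.T c.1 g a μ → valShift c.2 t ∈ g →
      ∃ z, μ.map (fun p => (p.2, valReset (valShift c.2 t) p.1)) = PMF.pure z ∧
        ∀ b, ¬ M.CanFire z b) :
    M.IsBisim fun c c' => ∀ a, M.CanFire c a ↔ M.CanFire c' a := by
  refine ⟨⟨fun _ _ => Iff.rfl, fun h a => (h a).symm, fun h h' a => (h a).trans (h' a)⟩,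
    fun c c' hcc => ⟨hV _ _, fun g a μ t hT hv => ?_⟩⟩
  obtain ⟨g', μ', t', hT', hv'⟩ := (hcc a).1 ⟨g, μ, t, hT, hv⟩
  obtain ⟨z, hz, hz_dead⟩ := hdead c g a μ t hT hv
  obtain ⟨z', hz', hz'_dead⟩ := hdead c' g' a μ' t' hT' hv'
  refine ⟨g', μ', t', hT', hv', fun s hs => ?_⟩
  rw [hz, hz']
  exact PMF.toOuterMeasure_pure_eq_of_eClosed (fun b => iff_of_false (hz_dead b) (hz'_dead b)) hs

def oneShot (r : ℝ≥0) : PTA Bool Unit Unit Unit where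
  V _ := ∅
  T l g _ μ := l = false ∧ g = {v | v () = r} ∧ μ = PMF.pure (∅, true)
  init := false

theorem oneShot_bisimilar (r1 r2 : ℝ≥0) : (oneShot r1).Bisimilar (oneShot r2) := by
  refine ⟨_, PTA.isBisim_canFire_iff _ ?_ ?_, fun _ => ?_⟩
  · rintro (_ | _) (_ | _) <;> rfl
  · rintro ⟨l, w⟩ g a μ t hT -
    rcases hT with ⟨_, _, rfl, ⟨rfl, -, rfl⟩, rfl⟩ | ⟨_, _, rfl, ⟨rfl, -, rfl⟩, rfl⟩ <;>
      refine ⟨_, by simp only [PMF.pure_map]; rfl, fun b => ?_⟩ <;>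
      simp [PTA.CanFire, PTA.sum_T_inl, PTA.sum_T_inr, oneShot]
  · exact iff_of_true ⟨_, _, r1, Or.inl ⟨false, _, rfl, ⟨rfl, rfl, rfl⟩, rfl⟩, zero_add r1⟩
      ⟨_, _, r2, Or.inr ⟨false, _, rfl, ⟨rfl, rfl, rfl⟩, rfl⟩, zero_add r2⟩

theorem oneShot_not_strongRef {r1 r2 : ℝ≥0} (h : r1 ≠ r2) :
    ¬ APTA.StrongRef (oneShot r1).toAPTA (oneShot r2).toAPTA := by
  rintro ⟨R, hR, hinit⟩
  have h1 : (oneShot r1).RegionEdge (false, valZero Unit) (fun _ => r1) () (PMF.pure (∅, true)) :=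
    ⟨_, r1, ⟨rfl, rfl, rfl⟩, funext fun _ => (zero_add r1).symm, rfl⟩
  obtain ⟨_, ⟨_, _, ⟨-, rfl, -⟩, -, hr⟩, -⟩ :=
    exists_regionEdge_of_strongRefRel_left hR hinit .init h1
  exact h hr

end Counterexample

end

/-- Proposition 3(b).  For PTAs `M1`, `M2` (viewed as
APTAs via `PTA.toAPTA`), `M1 ≼_S M2` implies `M1 ∼ M2`, and the
converse does not hold in general. -/
theorem strongref_implies_bisim :
    (∀ (L1 L2 A X AP : Type) (M1 : PTA L1 A X AP) (M2 : PTA L2 A X AP),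
        APTA.StrongRef M1.toAPTA M2.toAPTA → M1.Bisimilar M2) ∧
    (∃ (L1 L2 A X AP : Type) (M1 : PTA L1 A X AP) (M2 : PTA L2 A X AP),
        M1.Bisimilar M2 ∧ ¬ APTA.StrongRef M1.toAPTA M2.toAPTA) :=
  ⟨fun _ _ _ _ _ _ _ => PTA.bisimilar_of_strongRef,
    _, _, _, _, _, oneShot 1, oneShot 2, oneShot_bisimilar 1 2, oneShot_not_strongRef (by norm_num)⟩
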